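/- arXiv:2312.13878 — 6 statements merged into one kernel-verified Lean document; each statement's English description precedes it below -/
import Mathlib

section
/- Let ħ > 0, let N ≥ 1, let w_1, …, w_N be positive reals, and let Ĥ : ℝ² → ℂ^{2×2} be continuously differentiable with Ĥ(q,p) Hermitian for every (q,p). Suppose differentiable curves q_a, p_a : ℝ → ℝ and ρ_a : ℝ → ℂ^{2×2} (a = 1, …, N) satisfy the multi-trajectory Ehrenfest equations: q_a'(t) = Re Tr(ρ_a(t)·∂_p Ĥ(q_a(t), p_a(t))), p_a'(t) = −Re Tr(ρ_a(t)·∂_q Ĥ(q_a(t), p_a(t))), and iħ·ρ_a'(t) = [Ĥ(q_a(t), p_a(t)), ρ_a(t)]. Then the total energy h(t) := Σ_{a=1}^N w_a · Re Tr(ρ_a(t)·Ĥ(q_a(t), p_a(t))) is constant in t. -/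
/-!
Each trajectory conserves its own energy `Re Tr(ρ Ĥ)`, so the weighted sum is constant. Its
derivative splits into `Re Tr(ρ' Ĥ)`, which vanishes because `iħ ρ'` is a commutator with `Ĥ` and
the trace is cyclic, and `Re Tr(ρ dĤ(q', p'))`, which vanishes because `(q', p')` is the
Hamiltonian vector of the linear functional `v ↦ Re Tr(ρ dĤ v)`.
-/

open Matrix Complex

attribute [local instance] Matrix.normedAddCommGroup Matrix.normedSpace

theorem LinearMap.apply_hamiltonianVector_eq_zero {R : Type*} [CommRing R] (φ : R × R →ₗ[R] R) :
    φ (φ (0, 1), -φ (1, 0)) = 0 := by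
  have hsplit : ∀ x y : R, φ (x, y) = x * φ (1, 0) + y * φ (0, 1) := fun x y => by
    rw [← smul_eq_mul, ← smul_eq_mul y, ← φ.map_smul, ← φ.map_smul, ← φ.map_add]
    simp
  rw [hsplit]; ring

theorem Matrix.trace_mul_eq_zero_of_smul_eq_commutator {n K : Type*} [Fintype n] [Field K]
    {c : K} (hc : c ≠ 0) {D A B : Matrix n n K} (h : c • D = A * B - B * A) :
    (D * A).trace = 0 := by
  have hcomm : ((A * B - B * A) * A).trace = 0 := by
    rw [sub_mul, trace_sub, mul_assoc A, trace_mul_comm A, sub_self]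
  rw [← h, smul_mul_assoc, trace_smul] at hcomm
  exact (smul_eq_zero.mp hcomm).resolve_left hc

section Expectation

variable {n : Type*} [Fintype n]

noncomputable def Matrix.expectation : Matrix n n ℂ →L[ℝ] Matrix n n ℂ →L[ℝ] ℝ :=
  (LinearMap.mk₂ ℝ (fun ρ A => (ρ * A).trace.re)
    (fun _ _ _ => by simp [add_mul]) (fun _ _ _ => by simp)
    (fun _ _ _ => by simp [mul_add]) (fun _ _ _ => by simp)).toContinuousBilinearMap

theorem Matrix.expectation_apply (ρ A : Matrix n n ℂ) : expectation ρ A = (ρ * A).trace.re := rfl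

theorem hasDerivAt_expectation_comp {E : Type*} [NormedAddCommGroup E] [NormedSpace ℝ E]
    {ρ : ℝ → Matrix n n ℂ} {H : E → Matrix n n ℂ} {x : ℝ → E} {ρ' : Matrix n n ℂ}
    {H' : E →L[ℝ] Matrix n n ℂ} {x' : E} {t : ℝ}
    (hρ : HasDerivAt ρ ρ' t) (hH : HasFDerivAt H H' (x t)) (hx : HasDerivAt x x' t) :
    HasDerivAt (fun t => expectation (ρ t) (H (x t)))
      (expectation (ρ t) (H' x') + expectation ρ' (H (x t))) t :=
  expectation.hasDerivAt_of_bilinear (fun _ => hρ) (fun _ => hH.comp_hasDerivAt t hx)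

theorem expectation_eq_of_ehrenfest {c : ℂ} (hc : c ≠ 0) {H : ℝ × ℝ → Matrix n n ℂ}
    (hH : Differentiable ℝ H) {q p : ℝ → ℝ} {ρ : ℝ → Matrix n n ℂ}
    (hq : Differentiable ℝ q) (hp : Differentiable ℝ p) (hρ : Differentiable ℝ ρ)
    (heq_q : ∀ t, deriv q t = expectation (ρ t) (fderiv ℝ H (q t, p t) (0, 1)))
    (heq_p : ∀ t, deriv p t = -expectation (ρ t) (fderiv ℝ H (q t, p t) (1, 0)))
    (heq_ρ : ∀ t, c • deriv ρ t = H (q t, p t) * ρ t - ρ t * H (q t, p t)) (s t : ℝ) :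
    expectation (ρ s) (H (q s, p s)) = expectation (ρ t) (H (q t, p t)) := by
  have hderiv : ∀ t, HasDerivAt (fun t => expectation (ρ t) (H (q t, p t))) 0 t := by
    intro t
    have h := hasDerivAt_expectation_comp (hρ t).hasDerivAt (hH (q t, p t)).hasFDerivAt
      ((hq t).hasDerivAt.prodMk (hp t).hasDerivAt)
    have hflow : expectation (ρ t) (fderiv ℝ H (q t, p t) (deriv q t, deriv p t)) = 0 := by
      rw [heq_q, heq_p]
      exact (expectation (ρ t) ∘L fderiv ℝ H (q t, p t)).toLinearMap.apply_hamiltonianVector_eq_zero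
    have hcomm : expectation (deriv ρ t) (H (q t, p t)) = 0 := by
      rw [expectation_apply, trace_mul_eq_zero_of_smul_eq_commutator hc (heq_ρ t), zero_re]
    exact h.congr_deriv (by rw [hflow, zero_add]; exact hcomm)
  exact is_const_of_deriv_eq_zero (fun t => (hderiv t).differentiableAt)
    (fun t => (hderiv t).deriv) s t

end Expectation

theorem ehrenfest_energy_conservation_general
    (hbar : ℝ) (hhbar : 0 < hbar)
    (N : ℕ)
    (w : Fin N → ℝ)
    (Hh : ℝ × ℝ → Matrix (Fin 2) (Fin 2) ℂ)
    (hHsmooth : ContDiff ℝ 1 Hh)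
    (q p : Fin N → ℝ → ℝ)
    (ρ : Fin N → ℝ → Matrix (Fin 2) (Fin 2) ℂ)
    (hq : ∀ a, Differentiable ℝ (q a))
    (hp : ∀ a, Differentiable ℝ (p a))
    (hρ : ∀ a, Differentiable ℝ (ρ a))
    (heq_q : ∀ a t, deriv (q a) t =
      ((ρ a t * fderiv ℝ Hh (q a t, p a t) ((0 : ℝ), (1 : ℝ))).trace).re)
    (heq_p : ∀ a t, deriv (p a) t =
      -((ρ a t * fderiv ℝ Hh (q a t, p a t) ((1 : ℝ), (0 : ℝ))).trace).re)
    (heq_ρ : ∀ a t, (Complex.I * (hbar : ℂ)) • deriv (ρ a) t =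
      Hh (q a t, p a t) * ρ a t - ρ a t * Hh (q a t, p a t)) :
    ∀ s t : ℝ,
      ∑ a, w a * ((ρ a s * Hh (q a s, p a s)).trace).re
        = ∑ a, w a * ((ρ a t * Hh (q a t, p a t)).trace).re := by
  intro s t
  refine Finset.sum_congr rfl fun a _ => ?_
  have hc : I * (hbar : ℂ) ≠ 0 := mul_ne_zero I_ne_zero (ofReal_ne_zero.mpr hhbar.ne')
  congr 1
  exact expectation_eq_of_ehrenfest hc (hHsmooth.differentiable one_ne_zero) (hq a) (hp a)
    (hρ a) (heq_q a) (heq_p a) (heq_ρ a) s t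

/-- Conservation of the total energy
`h(t) = Σ_a w_a · Re Tr(ρ_a(t)·Ĥ(q_a(t), p_a(t)))` along the multi-trajectory
Ehrenfest equations.  Here `∂_q Ĥ` and `∂_p Ĥ` are realized as the Fréchet
derivative of `Ĥ : ℝ × ℝ → ℂ^{2×2}` applied to the directions `(1,0)` and
`(0,1)` respectively. -/
theorem ehrenfest_energy_conservation
    (hbar : ℝ) (hhbar : 0 < hbar)
    (N : ℕ) (hN : 1 ≤ N)
    (w : Fin N → ℝ) (hw : ∀ a, 0 < w a)
    (Hh : ℝ × ℝ → Matrix (Fin 2) (Fin 2) ℂ)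
    (hHsmooth : ContDiff ℝ 1 Hh)
    (hHherm : ∀ z, (Hh z).IsHermitian)
    (q p : Fin N → ℝ → ℝ)
    (ρ : Fin N → ℝ → Matrix (Fin 2) (Fin 2) ℂ)
    (hq : ∀ a, Differentiable ℝ (q a))
    (hp : ∀ a, Differentiable ℝ (p a))
    (hρ : ∀ a, Differentiable ℝ (ρ a))
    (heq_q : ∀ a t, deriv (q a) t =
      ((ρ a t * fderiv ℝ Hh (q a t, p a t) ((0 : ℝ), (1 : ℝ))).trace).re)
    (heq_p : ∀ a t, deriv (p a) t =
      -((ρ a t * fderiv ℝ Hh (q a t, p a t) ((1 : ℝ), (0 : ℝ))).trace).re)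
    (heq_ρ : ∀ a t, (Complex.I * (hbar : ℂ)) • deriv (ρ a) t =
      Hh (q a t, p a t) * ρ a t - ρ a t * Hh (q a t, p a t)) :
    ∀ s t : ℝ,
      ∑ a, w a * ((ρ a s * Hh (q a s, p a s)).trace).re
        = ∑ a, w a * ((ρ a t * Hh (q a t, p a t)).trace).re :=
  ehrenfest_energy_conservation_general hbar hhbar N w Hh hHsmooth q p ρ hq hp hρ heq_q heq_p heq_ρ
end

section
/- Let ħ > 0, let N ≥ 1, let w_1, …, w_N be positive reals, and let h : ℝ^N × ℝ^N × (ℂ^{2×2})^N → ℝ be continuously differentiable (regarding ℂ^{2×2} as a finite-dimensional real vector space). Let q_a, p_a : ℝ → ℝ and ρ_a : ℝ → ℂ^{2×2} (a = 1, …, N) be differentiable curves, and suppose there are continuous maps G_a : ℝ → ℂ^{2×2} with G_a(t) Hermitian for every t, such that for each a and t the partial derivative of h at (q(t), p(t), ρ(t)) with respect to the a-th matrix slot, applied to any direction δ ∈ ℂ^{2×2}, equals Re Tr(G_a(t)ᴴ·δ). If the curves satisfy the koopmon equations q_a'(t) = w_a^{-1}·∂h/∂p_a, p_a'(t) = −w_a^{-1}·∂h/∂q_a,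 and iħ·ρ_a'(t) = w_a^{-1}·[G_a(t), ρ_a(t)], then t ↦ h(q(t), p(t), ρ(t)) is constant. -/
open Matrix Complex

attribute [local instance] Matrix.normedAddCommGroup Matrix.normedSpace

/-!
Along a solution, the chain rule splits `d/dt h(q, p, ρ)` into one term per particle `a`.
The `q`- and `p`-parts of that term are `w_a⁻¹ (∂_q h ∂_p h - ∂_p h ∂_q h) = 0`, the
antisymmetry of the canonical bracket. The `ρ`-part is `Re Tr(G_a ρ_a')`, and
`iħ ρ_a' = w_a⁻¹ [G_a, ρ_a]` makes `Tr(G_a ρ_a')` a multiple of `Tr(G_a [G_a, ρ_a])`,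
which vanishes by cyclicity of the trace.
-/

theorem eq_of_hasDerivAt_of_fderiv_apply_eq_zero {E F : Type*}
    [NormedAddCommGroup E] [NormedSpace ℝ E] [NormedAddCommGroup F] [NormedSpace ℝ F]
    {h : E → F} (hh : Differentiable ℝ h) {x x' : ℝ → E} (hx : ∀ t, HasDerivAt x (x' t) t)
    (hzero : ∀ t, fderiv ℝ h (x t) (x' t) = 0) (s t : ℝ) :
    h (x s) = h (x t) := by
  have hcomp : ∀ t, HasDerivAt (h ∘ x) (fderiv ℝ h (x t) (x' t)) t := fun t =>
    (hh (x t)).hasFDerivAt.comp_hasDerivAt t (hx t)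
  exact is_const_of_deriv_eq_zero (fun t => (hcomp t).differentiableAt)
    (fun t => (hcomp t).deriv.trans (hzero t)) s t

theorem LinearMap.map_prod_pi_eq_sum {ι R M F : Type*} [Fintype ι] [DecidableEq ι]
    [CommSemiring R] [AddCommMonoid M] [Module R M] [AddCommMonoid F] [Module R F]
    (L : (ι → R) × (ι → R) × (ι → M) →ₗ[R] F) (u v : ι → R) (m : ι → M) :
    L (u, v, m) = ∑ a, (u a • L (Pi.single a 1, 0, 0) + v a • L (0, Pi.single a 1, 0)
      + L (0, 0, Pi.single a (m a))) := by
  have hsplit : ((u, v, m) : (ι → R) × (ι → R) × (ι → M)) = ∑ a, (u a • (Pi.single a 1, 0, 0)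
      + v a • (0, Pi.single a 1, 0) + (0, 0, Pi.single a (m a))) := by
    ext <;> simp [Prod.fst_sum, Prod.snd_sum, Finset.sum_apply, Pi.single_apply]
  simp only [hsplit, map_sum, map_add, map_smul]

theorem Matrix.trace_mul_commutator_self {n R : Type*} [Fintype n] [CommRing R]
    (A B : Matrix n n R) : (A * (A * B - B * A)).trace = 0 := by
  rw [Matrix.mul_sub, Matrix.trace_sub, ← Matrix.mul_assoc, Matrix.trace_mul_comm (A * A) B,
    Matrix.trace_mul_comm A (B * A), Matrix.mul_assoc, sub_self]

theorem Matrix.trace_mul_eq_zero_of_smul_eq_smul_commutator {n R S : Type*} [Fintype n]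
    [CommRing R] [NoZeroDivisors R] [Monoid S] [DistribMulAction S R] [SMulCommClass S R R]
    {A B X : Matrix n n R} {c : R} {d : S} (hc : c ≠ 0)
    (hX : c • X = d • (A * B - B * A)) : (A * X).trace = 0 := by
  have : c * (A * X).trace = 0 := by
    rw [← smul_eq_mul, ← Matrix.trace_smul, ← Matrix.mul_smul, hX, Matrix.mul_smul,
      Matrix.trace_smul, trace_mul_commutator_self, smul_zero]
  exact (mul_eq_zero.mp this).resolve_left hc

theorem koopmon_energy_conservation_general
    (hbar : ℝ) (hhbar : 0 < hbar)
    (N : ℕ)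
    (w : Fin N → ℝ)
    (h : (Fin N → ℝ) × (Fin N → ℝ) × (Fin N → Matrix (Fin 2) (Fin 2) ℂ) → ℝ)
    (hsmooth : ContDiff ℝ 1 h)
    (q p : Fin N → ℝ → ℝ)
    (ρ : Fin N → ℝ → Matrix (Fin 2) (Fin 2) ℂ)
    (hq : ∀ a, Differentiable ℝ (q a))
    (hp : ∀ a, Differentiable ℝ (p a))
    (hρ : ∀ a, Differentiable ℝ (ρ a))
    (G : Fin N → ℝ → Matrix (Fin 2) (Fin 2) ℂ)
    (hGherm : ∀ a t, (G a t).IsHermitian)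
    (hGrepr : ∀ (a : Fin N) (t : ℝ) (δ : Matrix (Fin 2) (Fin 2) ℂ),
      fderiv ℝ h (fun b => q b t, fun b => p b t, fun b => ρ b t)
          ((0 : Fin N → ℝ), (0 : Fin N → ℝ), Pi.single a δ)
        = (((G a t)ᴴ * δ).trace).re)
    (heq_q : ∀ a t, deriv (q a) t =
      (w a)⁻¹ * fderiv ℝ h (fun b => q b t, fun b => p b t, fun b => ρ b t)
        ((0 : Fin N → ℝ), Pi.single a (1 : ℝ), (0 : Fin N → Matrix (Fin 2) (Fin 2) ℂ)))
    (heq_p : ∀ a t, deriv (p a) t =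
      -((w a)⁻¹ * fderiv ℝ h (fun b => q b t, fun b => p b t, fun b => ρ b t)
        (Pi.single a (1 : ℝ), (0 : Fin N → ℝ), (0 : Fin N → Matrix (Fin 2) (Fin 2) ℂ))))
    (heq_ρ : ∀ a t, (Complex.I * (hbar : ℂ)) • deriv (ρ a) t =
      (w a)⁻¹ • (G a t * ρ a t - ρ a t * G a t)) :
    ∀ s t : ℝ,
      h (fun b => q b s, fun b => p b s, fun b => ρ b s)
        = h (fun b => q b t, fun b => p b t, fun b => ρ b t) := by
  have hcurve : ∀ t, HasDerivAt (fun t => (fun b => q b t, fun b => p b t, fun b => ρ b t))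
      (fun b => deriv (q b) t, fun b => deriv (p b) t, fun b => deriv (ρ b) t) t := fun t =>
    (hasDerivAt_pi.2 fun b => (hq b t).hasDerivAt).prodMk <|
      (hasDerivAt_pi.2 fun b => (hp b t).hasDerivAt).prodMk
        (hasDerivAt_pi.2 fun b => (hρ b t).hasDerivAt)
  refine eq_of_hasDerivAt_of_fderiv_apply_eq_zero (hsmooth.differentiable one_ne_zero) hcurve
    fun t => ?_
  rw [← ContinuousLinearMap.coe_coe, LinearMap.map_prod_pi_eq_sum]
  refine Finset.sum_eq_zero fun a _ => ?_
  have hρ_term : ((G a t)ᴴ * deriv (ρ a) t).trace = 0 := by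
    rw [(hGherm a t).eq]
    exact trace_mul_eq_zero_of_smul_eq_smul_commutator
      (mul_ne_zero I_ne_zero (ofReal_ne_zero.2 hhbar.ne')) (heq_ρ a t)
  simp only [ContinuousLinearMap.coe_coe, heq_q, heq_p, smul_eq_mul]
  -- The real zeros coming from `map_prod_pi_eq_sum` are `Real.instCommSemiring`'s, not
  -- syntactically `Real.instZero`, hence `erw` and `ring!`.
  erw [hGrepr, hρ_term, zero_re]
  ring!

/-- Energy conservation for the koopmon scheme: if `h` is a `C¹` Hamiltonian
function of the state `(q, p, ρ)`, whose partial derivative in each matrix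
slot `ρ_a` is represented via the real Frobenius pairing by a Hermitian matrix
`G_a(t)`, and the curves satisfy `q_a' = w_a⁻¹ ∂h/∂p_a`, `p_a' = −w_a⁻¹ ∂h/∂q_a`,
`iħ ρ_a' = w_a⁻¹ [G_a, ρ_a]`, then `t ↦ h(q(t), p(t), ρ(t))` is constant. -/
theorem koopmon_energy_conservation
    (hbar : ℝ) (hhbar : 0 < hbar)
    (N : ℕ) (hN : 1 ≤ N)
    (w : Fin N → ℝ) (hw : ∀ a, 0 < w a)
    (h : (Fin N → ℝ) × (Fin N → ℝ) × (Fin N → Matrix (Fin 2) (Fin 2) ℂ) → ℝ)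
    (hsmooth : ContDiff ℝ 1 h)
    (q p : Fin N → ℝ → ℝ)
    (ρ : Fin N → ℝ → Matrix (Fin 2) (Fin 2) ℂ)
    (hq : ∀ a, Differentiable ℝ (q a))
    (hp : ∀ a, Differentiable ℝ (p a))
    (hρ : ∀ a, Differentiable ℝ (ρ a))
    (G : Fin N → ℝ → Matrix (Fin 2) (Fin 2) ℂ)
    (hGcont : ∀ a, Continuous (G a))
    (hGherm : ∀ a t, (G a t).IsHermitian)
    (hGrepr : ∀ (a : Fin N) (t : ℝ) (δ : Matrix (Fin 2) (Fin 2) ℂ),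
      fderiv ℝ h (fun b => q b t, fun b => p b t, fun b => ρ b t)
          ((0 : Fin N → ℝ), (0 : Fin N → ℝ), Pi.single a δ)
        = (((G a t)ᴴ * δ).trace).re)
    (heq_q : ∀ a t, deriv (q a) t =
      (w a)⁻¹ * fderiv ℝ h (fun b => q b t, fun b => p b t, fun b => ρ b t)
        ((0 : Fin N → ℝ), Pi.single a (1 : ℝ), (0 : Fin N → Matrix (Fin 2) (Fin 2) ℂ)))
    (heq_p : ∀ a t, deriv (p a) t =
      -((w a)⁻¹ * fderiv ℝ h (fun b => q b t, fun b => p b t, fun b => ρ b t)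
        (Pi.single a (1 : ℝ), (0 : Fin N → ℝ), (0 : Fin N → Matrix (Fin 2) (Fin 2) ℂ))))
    (heq_ρ : ∀ a t, (Complex.I * (hbar : ℂ)) • deriv (ρ a) t =
      (w a)⁻¹ • (G a t * ρ a t - ρ a t * G a t)) :
    ∀ s t : ℝ,
      h (fun b => q b s, fun b => p b s, fun b => ρ b s)
        = h (fun b => q b t, fun b => p b t, fun b => ρ b t) :=
  koopmon_energy_conservation_general hbar hhbar N w h hsmooth q p ρ hq hp hρ G hGherm hGrepr heq_q
    heq_p heq_ρ
end

section
/- For α > 0 let K^{(α)} : ℝ² → ℝ be the Gaussian kernel K^{(α)}(q, p) := (1/(π α²))·exp(−(q² + p²)/α²). Let ζ_1, …, ζ_N ∈ ℝ² be points, w_1, …, w_N positive weights, and Ĥ : ℝ² → ℂ^{2×2} a continuously differentiable map with Ĥ(z) Hermitian for every z and with bounded derivative (i.e. sup_z ‖DĤ(z)‖ < ∞). Set K_s^{(α)}(z) := K^{(α)}(z − ζ_s). Then for every α > 0 the function z ↦ (K_a^{(α)}(z)·{K_b^{(α)}, Ĥ}(z) − K_b^{(α)}(z)·{K_a^{(α)},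 Ĥ}(z)) / (Σ_{c=1}^N w_c K_c^{(α)}(z)) is Bochner integrable on ℝ², and the backreaction integral Î_{ab}^{(α)} := (1/2) ∫_{ℝ²} (K_a^{(α)}(z)·{K_b^{(α)}, Ĥ}(z) − K_b^{(α)}(z)·{K_a^{(α)}, Ĥ}(z)) / (Σ_{c=1}^N w_c K_c^{(α)}(z)) dz converges to the zero matrix as α → ∞. -/
open Matrix Complex MeasureTheory Filter

attribute [local instance] Matrix.normedAddCommGroup Matrix.normedSpace

/-- Port: instance search no longer unifies the matrix topology with the one induced by the
sup norm, so the two instances found by the older library are given explicitly. -/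
noncomputable instance matrixSupContinuousENorm : ContinuousENorm (Matrix (Fin 2) (Fin 2) ℂ) :=
  SeminormedAddGroup.toContinuousENorm

noncomputable instance matrixSupCLMOpNorm : Norm (ℝ × ℝ →L[ℝ] Matrix (Fin 2) (Fin 2) ℂ) :=
  ContinuousLinearMap.hasOpNorm

/-- The canonical Poisson bracket `{f, g} = ∂_q f · ∂_p g − ∂_p f · ∂_q g` of a
scalar function `f` with a matrix-valued function `g` on phase space `ℝ²`. -/
noncomputable def pbracketM (f : ℝ × ℝ → ℝ) (g : ℝ × ℝ → Matrix (Fin 2) (Fin 2) ℂ)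
    (z : ℝ × ℝ) : Matrix (Fin 2) (Fin 2) ℂ :=
  (fderiv ℝ f z ((1 : ℝ), (0 : ℝ))) • (fderiv ℝ g z ((0 : ℝ), (1 : ℝ)))
    - (fderiv ℝ f z ((0 : ℝ), (1 : ℝ))) • (fderiv ℝ g z ((1 : ℝ), (0 : ℝ)))

/-- The normalized Gaussian kernel of width `α` on phase space `ℝ²`. -/
noncomputable def gaussKer (α : ℝ) (z : ℝ × ℝ) : ℝ :=
  (1 / (Real.pi * α ^ 2)) * Real.exp (-(z.1 ^ 2 + z.2 ^ 2) / α ^ 2)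

/-!
The gradient of a shifted Gaussian is `∇K_s(z) = -(2/α²) (z - ζ_s) K_s(z)`, so in
`K_a {K_b, Ĥ} - K_b {K_a, Ĥ}` the `z`-dependent parts of the two gradients cancel and the
combination collapses to `-(2/α²) K_a K_b · DĤ(J(ζ_a - ζ_b))`, with `J` the symplectic rotation.
Since the denominator `Σ_c w_c K_c` dominates `w_a K_a`, the integrand is bounded by
`(2/α²) w_a⁻¹ ‖DĤ‖ ‖ζ_a - ζ_b‖ K_b`; as `K_b` is a probability density, the integral is
`O(α⁻²)`.
-/

theorem pbracketM_eq_fderiv_apply (f : ℝ × ℝ → ℝ) (g : ℝ × ℝ → Matrix (Fin 2) (Fin 2) ℂ)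
    (z : ℝ × ℝ) :
    pbracketM f g z = fderiv ℝ g z (-fderiv ℝ f z (0, 1), fderiv ℝ f z (1, 0)) := by
  have hv : ((-fderiv ℝ f z (0, 1), fderiv ℝ f z (1, 0)) : ℝ × ℝ) =
      fderiv ℝ f z (1, 0) • ((0 : ℝ), (1 : ℝ)) - fderiv ℝ f z (0, 1) • ((1 : ℝ), (0 : ℝ)) := by
    ext <;> simp
  rw [hv, map_sub, map_smul, map_smul, pbracketM]

theorem gaussKer_pos {α : ℝ} (hα : α ≠ 0) (z : ℝ × ℝ) : 0 < gaussKer α z := by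
  unfold gaussKer
  positivity

@[fun_prop]
theorem continuous_gaussKer (α : ℝ) : Continuous (gaussKer α) := by
  unfold gaussKer
  fun_prop

theorem hasFDerivAt_gaussKer (α : ℝ) (z : ℝ × ℝ) :
    HasFDerivAt (gaussKer α)
      ((-2 / α ^ 2 * gaussKer α z) •
        (z.1 • ContinuousLinearMap.fst ℝ ℝ ℝ + z.2 • ContinuousLinearMap.snd ℝ ℝ ℝ)) z := by
  have hq := ((hasFDerivAt_fst (𝕜 := ℝ) (p := z)).pow 2 |>.add
    ((hasFDerivAt_snd (𝕜 := ℝ) (p := z)).pow 2)).neg.mul_const (α ^ 2)⁻¹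
  refine (hq.exp.const_mul (1 / (Real.pi * α ^ 2))).congr_fderiv ?_
  ext <;> simp [gaussKer, div_eq_mul_inv] <;> ring

theorem fderiv_gaussKer_comp_sub_apply (α : ℝ) (ζ₀ z v : ℝ × ℝ) :
    fderiv ℝ (fun y => gaussKer α (y - ζ₀)) z v =
      -2 / α ^ 2 * gaussKer α (z - ζ₀) * ((z - ζ₀).1 * v.1 + (z - ζ₀).2 * v.2) := by
  rw [fderiv_comp_sub, (hasFDerivAt_gaussKer α (z - ζ₀)).fderiv]
  simp only [Prod.fst_sub, Prod.snd_sub, smul_add, _root_.add_apply,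
    _root_.smul_apply, ContinuousLinearMap.coe_fst', ContinuousLinearMap.coe_snd',
    smul_eq_mul]
  ring

theorem gaussKer_eq_mul (α : ℝ) : gaussKer α =
    fun z : ℝ × ℝ => (1 / (Real.pi * α ^ 2) * Real.exp (-(α ^ 2)⁻¹ * z.1 ^ 2)) *
      Real.exp (-(α ^ 2)⁻¹ * z.2 ^ 2) := by
  funext z
  rw [gaussKer, mul_assoc, ← Real.exp_add]
  congr 2
  ring

theorem integrable_gaussKer {α : ℝ} (hα : α ≠ 0) : Integrable (gaussKer α) := by
  have hb : 0 < (α ^ 2)⁻¹ := by positivity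
  rw [gaussKer_eq_mul]
  exact ((integrable_exp_neg_mul_sq hb).const_mul _).mul_prod (integrable_exp_neg_mul_sq hb)

theorem integral_gaussKer {α : ℝ} (hα : α ≠ 0) : ∫ z, gaussKer α z = 1 := by
  have hb : 0 < (α ^ 2)⁻¹ := by positivity
  rw [gaussKer_eq_mul, Measure.volume_eq_prod,
    integral_prod_mul (fun x => 1 / (Real.pi * α ^ 2) * Real.exp (-(α ^ 2)⁻¹ * x ^ 2))
      (fun x => Real.exp (-(α ^ 2)⁻¹ * x ^ 2)), integral_const_mul,
    integral_gaussian, mul_assoc, Real.mul_self_sqrt (by positivity)]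
  field_simp

theorem gaussKer_smul_pbracketM_sub (α : ℝ) (Hh : ℝ × ℝ → Matrix (Fin 2) (Fin 2) ℂ)
    (ζa ζb z : ℝ × ℝ) :
    gaussKer α (z - ζa) • pbracketM (fun y => gaussKer α (y - ζb)) Hh z
      - gaussKer α (z - ζb) • pbracketM (fun y => gaussKer α (y - ζa)) Hh z
    = (-2 / α ^ 2 * (gaussKer α (z - ζa) * gaussKer α (z - ζb))) •
        fderiv ℝ Hh z (-(ζa - ζb).2, (ζa - ζb).1) := by
  simp only [pbracketM_eq_fderiv_apply, fderiv_gaussKer_comp_sub_apply, ← map_smul, ← map_sub]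
  congr 1
  ext <;> simp <;> ring

theorem inv_sum_mul_mul_le {ι : Type*} [Fintype ι] {w K : ι → ℝ} (hw : ∀ c, 0 < w c)
    (hK : ∀ c, 0 < K c) (a : ι) {y : ℝ} (hy : 0 ≤ y) :
    (∑ c, w c * K c)⁻¹ * (K a * y) ≤ (w a)⁻¹ * y := by
  have hS : w a * K a ≤ ∑ c, w c * K c :=
    Finset.single_le_sum (fun c _ => (mul_pos (hw c) (hK c)).le) (Finset.mem_univ a)
  calc (∑ c, w c * K c)⁻¹ * (K a * y) = K a / (∑ c, w c * K c) * y := by ring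
    _ ≤ (w a)⁻¹ * y := by
      gcongr
      rw [div_le_iff₀ ((mul_pos (hw a) (hK a)).trans_le hS), inv_mul_eq_div, le_div_iff₀ (hw a)]
      linarith

section Backreaction

variable {ι : Type*} [Fintype ι] (ζ : ι → ℝ × ℝ) (w : ι → ℝ)
  (Hh : ℝ × ℝ → Matrix (Fin 2) (Fin 2) ℂ) (a b : ι)

noncomputable def backreactionIntegrand (α : ℝ) (z : ℝ × ℝ) : Matrix (Fin 2) (Fin 2) ℂ :=
  (∑ c, w c * gaussKer α (z - ζ c))⁻¹ •
    (gaussKer α (z - ζ a) • pbracketM (fun y => gaussKer α (y - ζ b)) Hh z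
      - gaussKer α (z - ζ b) • pbracketM (fun y => gaussKer α (y - ζ a)) Hh z)

theorem backreactionIntegrand_eq (α : ℝ) (z : ℝ × ℝ) :
    backreactionIntegrand ζ w Hh a b α z =
      ((∑ c, w c * gaussKer α (z - ζ c))⁻¹ *
          (-2 / α ^ 2 * (gaussKer α (z - ζ a) * gaussKer α (z - ζ b)))) •
        fderiv ℝ Hh z (-(ζ a - ζ b).2, (ζ a - ζ b).1) := by
  rw [backreactionIntegrand, gaussKer_smul_pbracketM_sub, smul_smul]

theorem aestronglyMeasurable_backreactionIntegrand (α : ℝ) :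
    AEStronglyMeasurable (backreactionIntegrand ζ w Hh a b α) := by
  have hscalar : Measurable fun z => (∑ c, w c * gaussKer α (z - ζ c))⁻¹ *
      (-2 / α ^ 2 * (gaussKer α (z - ζ a) * gaussKer α (z - ζ b))) := by
    fun_prop
  borelize (ℝ × ℝ →L[ℝ] Matrix (Fin 2) (Fin 2) ℂ)
  have hderiv : AEStronglyMeasurable (fun z => fderiv ℝ Hh z (-(ζ a - ζ b).2, (ζ a - ζ b).1)) :=
    (ContinuousLinearMap.apply ℝ _ _).continuous.comp_aestronglyMeasurable
      (measurable_fderiv ℝ Hh).aestronglyMeasurable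
  rw [funext (backreactionIntegrand_eq ζ w Hh a b α)]
  exact hscalar.aestronglyMeasurable.smul hderiv

variable {w Hh} {C : ℝ}

theorem norm_backreactionIntegrand_le (hw : ∀ c, 0 < w c) (hC : ∀ z, ‖fderiv ℝ Hh z‖ ≤ C)
    {α : ℝ} (hα : α ≠ 0) (z : ℝ × ℝ) :
    ‖backreactionIntegrand ζ w Hh a b α z‖ ≤
      2 * (w a)⁻¹ * (C * ‖ζ a - ζ b‖) / α ^ 2 * gaussKer α (z - ζ b) := by
  have hKb := gaussKer_pos hα (z - ζ b)
  have hscalar : ‖(∑ c, w c * gaussKer α (z - ζ c))⁻¹ *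
      (-2 / α ^ 2 * (gaussKer α (z - ζ a) * gaussKer α (z - ζ b)))‖ ≤
        2 / α ^ 2 * ((w a)⁻¹ * gaussKer α (z - ζ b)) := by
    have hpos : 0 ≤ (∑ c, w c * gaussKer α (z - ζ c))⁻¹ *
        (gaussKer α (z - ζ a) * gaussKer α (z - ζ b)) :=
      mul_nonneg (inv_nonneg.2 (Finset.sum_nonneg fun c _ => (mul_pos (hw c)
        (gaussKer_pos hα _)).le)) (mul_pos (gaussKer_pos hα _) hKb).le
    rw [mul_left_comm, norm_mul, Real.norm_of_nonneg hpos, neg_div, norm_neg,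
      Real.norm_of_nonneg (by positivity)]
    exact mul_le_mul_of_nonneg_left
      (inv_sum_mul_mul_le hw (fun c => gaussKer_pos hα (z - ζ c)) a hKb.le) (by positivity)
  have hderiv : ‖fderiv ℝ Hh z (-(ζ a - ζ b).2, (ζ a - ζ b).1)‖ ≤ C * ‖ζ a - ζ b‖ := by
    have hrot : ‖((-(ζ a - ζ b).2, (ζ a - ζ b).1) : ℝ × ℝ)‖ = ‖ζ a - ζ b‖ := by
      simp only [Prod.norm_def, norm_neg, max_comm]
    calc _ ≤ ‖fderiv ℝ Hh z‖ * ‖ζ a - ζ b‖ := hrot ▸ (fderiv ℝ Hh z).le_opNorm _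
      _ ≤ C * ‖ζ a - ζ b‖ := by gcongr; exact hC z
  rw [backreactionIntegrand_eq, norm_smul]
  calc _ ≤ 2 / α ^ 2 * ((w a)⁻¹ * gaussKer α (z - ζ b)) * (C * ‖ζ a - ζ b‖) :=
        mul_le_mul hscalar hderiv (norm_nonneg _) (by have := hw a; positivity)
    _ = _ := by ring

theorem integrable_backreactionIntegrand (hw : ∀ c, 0 < w c) (hC : ∀ z, ‖fderiv ℝ Hh z‖ ≤ C)
    {α : ℝ} (hα : α ≠ 0) : Integrable (backreactionIntegrand ζ w Hh a b α) :=
  (((integrable_gaussKer hα).comp_sub_right (ζ b)).const_mul _).mono'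
    (aestronglyMeasurable_backreactionIntegrand ζ w Hh a b α)
    (.of_forall (norm_backreactionIntegrand_le ζ a b hw hC hα))

theorem norm_integral_backreactionIntegrand_le (hw : ∀ c, 0 < w c)
    (hC : ∀ z, ‖fderiv ℝ Hh z‖ ≤ C) {α : ℝ} (hα : α ≠ 0) :
    ‖∫ z, backreactionIntegrand ζ w Hh a b α z‖ ≤ 2 * (w a)⁻¹ * (C * ‖ζ a - ζ b‖) / α ^ 2 :=
  calc _ ≤ ∫ z, 2 * (w a)⁻¹ * (C * ‖ζ a - ζ b‖) / α ^ 2 * gaussKer α (z - ζ b) :=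
        norm_integral_le_of_norm_le (((integrable_gaussKer hα).comp_sub_right (ζ b)).const_mul _)
          (.of_forall (norm_backreactionIntegrand_le ζ a b hw hC hα))
    _ = _ := by rw [integral_const_mul, integral_sub_right_eq_self, integral_gaussKer hα, mul_one]

theorem tendsto_integral_backreactionIntegrand_atTop (hw : ∀ c, 0 < w c)
    (hC : ∀ z, ‖fderiv ℝ Hh z‖ ≤ C) :
    Tendsto (fun α => ∫ z, backreactionIntegrand ζ w Hh a b α z) atTop (nhds 0) :=
  squeeze_zero_norm'
    ((eventually_ne_atTop 0).mono fun _ hα => norm_integral_backreactionIntegrand_le ζ a b hw hC hα)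
    (tendsto_const_nhds.div_atTop (tendsto_pow_atTop two_ne_zero))

end Backreaction

theorem backreaction_integral_gaussian_vanishes_atTop_general
    (N : ℕ)
    (ζ : Fin N → ℝ × ℝ)
    (w : Fin N → ℝ) (hw : ∀ c, 0 < w c)
    (Hh : ℝ × ℝ → Matrix (Fin 2) (Fin 2) ℂ)
    (hHbdd : ∃ C : ℝ, ∀ z : ℝ × ℝ, ‖fderiv ℝ Hh z‖ ≤ C) :
    ∀ a b : Fin N,
      (∀ α : ℝ, 0 < α → Integrable (fun z : ℝ × ℝ =>
        (∑ c, w c * gaussKer α (z - ζ c))⁻¹ •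
          (gaussKer α (z - ζ a) • pbracketM (fun y => gaussKer α (y - ζ b)) Hh z
            - gaussKer α (z - ζ b) • pbracketM (fun y => gaussKer α (y - ζ a)) Hh z)))
      ∧
      Tendsto (fun α : ℝ =>
        ((1 : ℝ) / 2) • ∫ z : ℝ × ℝ,
          (∑ c, w c * gaussKer α (z - ζ c))⁻¹ •
            (gaussKer α (z - ζ a) • pbracketM (fun y => gaussKer α (y - ζ b)) Hh z
              - gaussKer α (z - ζ b) • pbracketM (fun y => gaussKer α (y - ζ a)) Hh z))
        atTop (nhds 0) := by
  intro a b
  obtain ⟨C, hC⟩ := hHbdd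
  refine ⟨fun α hα => integrable_backreactionIntegrand ζ a b hw hC hα.ne', ?_⟩
  have h := (tendsto_integral_backreactionIntegrand_atTop ζ a b hw hC).const_smul ((1 : ℝ) / 2)
  rw [smul_zero] at h
  exact h

/-- For Gaussian regularization kernels, the koopmon backreaction integrals
`Î_{ab}^{(α)}` are well defined for every width `α > 0` and vanish in the
limit `α → ∞`, recovering the multi-trajectory Ehrenfest scheme. -/
theorem backreaction_integral_gaussian_vanishes_atTop
    (N : ℕ) (hN : 1 ≤ N)
    (ζ : Fin N → ℝ × ℝ)
    (w : Fin N → ℝ) (hw : ∀ c, 0 < w c)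
    (Hh : ℝ × ℝ → Matrix (Fin 2) (Fin 2) ℂ)
    (hHsmooth : ContDiff ℝ 1 Hh)
    (hHherm : ∀ z, (Hh z).IsHermitian)
    (hHbdd : ∃ C : ℝ, ∀ z : ℝ × ℝ, ‖fderiv ℝ Hh z‖ ≤ C) :
    ∀ a b : Fin N,
      (∀ α : ℝ, 0 < α → Integrable (fun z : ℝ × ℝ =>
        (∑ c, w c * gaussKer α (z - ζ c))⁻¹ •
          (gaussKer α (z - ζ a) • pbracketM (fun y => gaussKer α (y - ζ b)) Hh z
            - gaussKer α (z - ζ b) • pbracketM (fun y => gaussKer α (y - ζ a)) Hh z)))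
      ∧
      Tendsto (fun α : ℝ =>
        ((1 : ℝ) / 2) • ∫ z : ℝ × ℝ,
          (∑ c, w c * gaussKer α (z - ζ c))⁻¹ •
            (gaussKer α (z - ζ a) • pbracketM (fun y => gaussKer α (y - ζ b)) Hh z
              - gaussKer α (z - ζ b) • pbracketM (fun y => gaussKer α (y - ζ a)) Hh z))
        atTop (nhds 0) :=
  backreaction_integral_gaussian_vanishes_atTop_general N ζ w hw Hh hHbdd
end

section
/- Let ħ > 0, let H : ℝ² → ℝ be differentiable, let φ : ℝ × ℝ² → ℝ be an arbitrary real-valued function, and let χ : ℝ × ℝ² → ℂ be differentiable and satisfy the phase-modified Koopman–von Neumann equation ∂_t χ(t, z) = {H, χ(t, ·)}(z) − (i/ħ)·φ(t, z)·χ(t, z) for all (t, z) ∈ ℝ × ℝ². Then the density f(t, z) := |χ(t, z)|² satisfies the classical Liouville equation ∂_t f(t, z) = {H, f(t, ·)}(z) for all (t, z). -/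
open Complex

/-!
The time derivative of `|χ|² = ⟪χ, χ⟫_ℝ` is `2 ⟪χ, ∂_t χ⟫_ℝ`, which is real-linear in `∂_t χ`.
The bracket part of the modified equation therefore yields `{H, |χ|²}`, while the phase term
`-(i/ħ) φ χ` is a purely imaginary multiple of `χ`, hence real-orthogonal to `χ`, and drops out.
-/

theorem fderiv_normSq_apply {E : Type*} [NormedAddCommGroup E] [NormedSpace ℝ E]
    {f : E → ℂ} {x : E} (hf : DifferentiableAt ℝ f x) (v : E) :
    fderiv ℝ (fun y => normSq (f y)) x v = 2 * inner ℝ (f x) (fderiv ℝ f x v) := by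
  simp only [normSq_eq_norm_sq]
  rw [hf.hasFDerivAt.norm_sq.fderiv, smul_apply, ContinuousLinearMap.comp_apply,
    innerSL_apply_apply, nsmul_eq_mul, Nat.cast_ofNat]

theorem Complex.real_inner_mul_self_right (w z : ℂ) :
    inner ℝ z (w * z) = w.re * normSq z := by
  rw [Complex.inner, mul_assoc, mul_conj, re_mul_ofReal]

theorem phase_modified_kvn_gives_liouville_general
    (hbar : ℝ)
    (H : ℝ × ℝ → ℝ)
    (φ : ℝ × (ℝ × ℝ) → ℝ)
    (χ : ℝ × (ℝ × ℝ) → ℂ) (hχ : Differentiable ℝ χ)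
    (hkvn : ∀ (t : ℝ) (z : ℝ × ℝ),
      fderiv ℝ χ (t, z) ((1 : ℝ), ((0 : ℝ), (0 : ℝ)))
        = (fderiv ℝ H z ((1 : ℝ), (0 : ℝ))) •
            fderiv ℝ χ (t, z) ((0 : ℝ), ((0 : ℝ), (1 : ℝ)))
          - (fderiv ℝ H z ((0 : ℝ), (1 : ℝ))) •
            fderiv ℝ χ (t, z) ((0 : ℝ), ((1 : ℝ), (0 : ℝ)))
          - (Complex.I / (hbar : ℂ)) * (φ (t, z) : ℂ) * χ (t, z)) :
    ∀ (t : ℝ) (z : ℝ × ℝ),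
      fderiv ℝ (fun x : ℝ × (ℝ × ℝ) => Complex.normSq (χ x)) (t, z)
          ((1 : ℝ), ((0 : ℝ), (0 : ℝ)))
        = (fderiv ℝ H z ((1 : ℝ), (0 : ℝ))) *
            fderiv ℝ (fun x : ℝ × (ℝ × ℝ) => Complex.normSq (χ x)) (t, z)
              ((0 : ℝ), ((0 : ℝ), (1 : ℝ)))
          - (fderiv ℝ H z ((0 : ℝ), (1 : ℝ))) *
            fderiv ℝ (fun x : ℝ × (ℝ × ℝ) => Complex.normSq (χ x)) (t, z)
              ((0 : ℝ), ((1 : ℝ), (0 : ℝ))) := by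
  intro t z
  have phase_orthogonal :
      inner ℝ (χ (t, z)) ((I / hbar) * φ (t, z) * χ (t, z)) = 0 := by
    rw [real_inner_mul_self_right]
    simp
  simp only [fderiv_normSq_apply (hχ _), hkvn t z, inner_sub_right, inner_smul_right,
    phase_orthogonal]
  ring

/-- If a Koopman wavefunction `χ` satisfies the phase-modified Koopman–von
Neumann equation `∂_t χ = {H, χ} − (i/ħ)·φ·χ` for an arbitrary real phase
function `φ`, then the density `f = |χ|²` satisfies the classical Liouville
equation `∂_t f = {H, f}`. -/
theorem phase_modified_kvn_gives_liouville
    (hbar : ℝ) (hhbar : 0 < hbar)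
    (H : ℝ × ℝ → ℝ) (hH : Differentiable ℝ H)
    (φ : ℝ × (ℝ × ℝ) → ℝ)
    (χ : ℝ × (ℝ × ℝ) → ℂ) (hχ : Differentiable ℝ χ)
    (hkvn : ∀ (t : ℝ) (z : ℝ × ℝ),
      fderiv ℝ χ (t, z) ((1 : ℝ), ((0 : ℝ), (0 : ℝ)))
        = (fderiv ℝ H z ((1 : ℝ), (0 : ℝ))) •
            fderiv ℝ χ (t, z) ((0 : ℝ), ((0 : ℝ), (1 : ℝ)))
          - (fderiv ℝ H z ((0 : ℝ), (1 : ℝ))) •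
            fderiv ℝ χ (t, z) ((0 : ℝ), ((1 : ℝ), (0 : ℝ)))
          - (Complex.I / (hbar : ℂ)) * (φ (t, z) : ℂ) * χ (t, z)) :
    ∀ (t : ℝ) (z : ℝ × ℝ),
      fderiv ℝ (fun x : ℝ × (ℝ × ℝ) => Complex.normSq (χ x)) (t, z)
          ((1 : ℝ), ((0 : ℝ), (0 : ℝ)))
        = (fderiv ℝ H z ((1 : ℝ), (0 : ℝ))) *
            fderiv ℝ (fun x : ℝ × (ℝ × ℝ) => Complex.normSq (χ x)) (t, z)
              ((0 : ℝ), ((0 : ℝ), (1 : ℝ)))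
          - (fderiv ℝ H z ((0 : ℝ), (1 : ℝ))) *
            fderiv ℝ (fun x : ℝ × (ℝ × ℝ) => Complex.normSq (χ x)) (t, z)
              ((0 : ℝ), ((1 : ℝ), (0 : ℝ))) :=
  phase_modified_kvn_gives_liouville_general hbar H φ χ hχ hkvn
end

section
/- Let N ≥ 1, let K_1, K_2 : ℝ² → ℝ be strictly positive C¹ kernels, let ζ_1^{(1)}, …, ζ_1^{(N)} ∈ ℝ² and ζ_2^{(1)}, …, ζ_2^{(N)} ∈ ℝ² be points, and let w_1, …, w_N be positive weights; set K_ℓ^{(s)}(z) := K_ℓ(z − ζ_ℓ^{(s)}) for ℓ ∈ {1,2}. Let the hybrid Hamiltonian Ĥ : ℝ² × ℝ² → ℂ^{2×2} have the form Ĥ(z_1, z_2) = H_c(z_1, z_2)·𝟙 + Ĥ_Q + h_1(z_1)·Ĥ_2(z_2) + h_2(z_2)·Ĥ_1(z_1), where H_c : ℝ² × ℝ² → ℝ is C¹, Ĥ_Q ∈ ℂ^{2×2} is a constant Hermitian matrix, h_1, h_2 : ℝ² → ℝ are C¹, and Ĥ_1, Ĥ_2 : ℝ² → ℂ^{2×2}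 are C¹ with Hermitian values. Fix indices a, b, a', b' ∈ {1, …, N} and define the four-dimensional backreaction integral Î_{aba'b'} := ∫_{ℝ²}∫_{ℝ²} [ K_1^{(a)}(z_1) K_2^{(b)}(z_2) K_2^{(b')}(z_2)·{K_1^{(a')}, Ĥ(·, z_2)}_1(z_1) + K_1^{(a)}(z_1) K_2^{(b)}(z_2) K_1^{(a')}(z_1)·{K_2^{(b')}, Ĥ(z_1, ·)}_2(z_2) ] / ( (Σ_c w_c K_1^{(c)}(z_1))·(Σ_d w_d K_2^{(d)}(z_2)) ) dz_1 dz_2, where {·,·}_ℓ denotes the canonical Poisson bracket in the variable z_ℓ. Assume that the integrand of Î_{aba'b'}, each of the summands it splits into according to the four terms of Ĥ, and each of the two-dimensional integrands below are Bochner integrable. Then there exists a real constant c ∈ ℝ such that Î_{aba'b'} = Î_1^{(aa')}·𝒥_2^{(bb')} + 𝓘_1^{(aa')}·𝒥̂_2^{(bb')} + 𝓘_2^{(bb')}·𝒥̂_1^{(aa')} + Î_2^{(bb')}·𝒥_1^{(aa')} + c·𝟙, where for ℓ ∈ {1,2} and indices s, s': 𝓘_ℓ^{(ss')} := ∫_{ℝ²}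 K_ℓ^{(s)}·{K_ℓ^{(s')}, h_ℓ} / (Σ_c w_c K_ℓ^{(c)}) dz_ℓ ∈ ℝ, Î_ℓ^{(ss')} := ∫_{ℝ²} K_ℓ^{(s)}·{K_ℓ^{(s')}, Ĥ_ℓ} / (Σ_c w_c K_ℓ^{(c)}) dz_ℓ ∈ ℂ^{2×2}, 𝒥_ℓ^{(ss')} := ∫_{ℝ²} K_ℓ^{(s)} K_ℓ^{(s')} h_ℓ / (Σ_d w_d K_ℓ^{(d)}) dz_ℓ ∈ ℝ, and 𝒥̂_ℓ^{(ss')} := ∫_{ℝ²} K_ℓ^{(s)} K_ℓ^{(s')} Ĥ_ℓ / (Σ_d w_d K_ℓ^{(d)}) dz_ℓ ∈ ℂ^{2×2}. -/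
open Matrix Complex MeasureTheory

attribute [local instance] Matrix.normedAddCommGroup Matrix.normedSpace

noncomputable section

/-- The canonical Poisson bracket `{f, g} = ∂_q f · ∂_p g − ∂_p f · ∂_q g` of two
scalar functions on phase space `ℝ²`. -/
def pbR (f g : ℝ × ℝ → ℝ) (z : ℝ × ℝ) : ℝ :=
  fderiv ℝ f z ((1 : ℝ), (0 : ℝ)) * fderiv ℝ g z ((0 : ℝ), (1 : ℝ))
    - fderiv ℝ f z ((0 : ℝ), (1 : ℝ)) * fderiv ℝ g z ((1 : ℝ), (0 : ℝ))

/-- The canonical Poisson bracket of a scalar function with a matrix-valued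
function on phase space `ℝ²`. -/
def pbM (f : ℝ × ℝ → ℝ) (g : ℝ × ℝ → Matrix (Fin 2) (Fin 2) ℂ)
    (z : ℝ × ℝ) : Matrix (Fin 2) (Fin 2) ℂ :=
  (fderiv ℝ f z ((1 : ℝ), (0 : ℝ))) • (fderiv ℝ g z ((0 : ℝ), (1 : ℝ)))
    - (fderiv ℝ f z ((0 : ℝ), (1 : ℝ))) • (fderiv ℝ g z ((1 : ℝ), (0 : ℝ)))

/-- The weighted sum `Σ_c w_c K(z − ζ_c)` appearing in the denominators. -/
def den {N : ℕ} (w : Fin N → ℝ) (K : ℝ × ℝ → ℝ) (ζ : Fin N → ℝ × ℝ)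
    (z : ℝ × ℝ) : ℝ :=
  ∑ c, w c * K (z - ζ c)

/-- The integrand of the four-dimensional backreaction integral `Î_{aba'b'}`,
for an arbitrary (matrix-valued) Hamiltonian `G` on `ℝ² × ℝ²`. -/
def integrand4 {N : ℕ} (w : Fin N → ℝ) (K1 K2 : ℝ × ℝ → ℝ)
    (ζ1 ζ2 : Fin N → ℝ × ℝ) (a b a' b' : Fin N)
    (G : (ℝ × ℝ) × (ℝ × ℝ) → Matrix (Fin 2) (Fin 2) ℂ)
    (z : (ℝ × ℝ) × (ℝ × ℝ)) : Matrix (Fin 2) (Fin 2) ℂ :=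
  (den w K1 ζ1 z.1 * den w K2 ζ2 z.2)⁻¹ •
    ((K1 (z.1 - ζ1 a) * K2 (z.2 - ζ2 b) * K2 (z.2 - ζ2 b')) •
        pbM (fun y => K1 (y - ζ1 a')) (fun y => G (y, z.2)) z.1
      + (K1 (z.1 - ζ1 a) * K2 (z.2 - ζ2 b) * K1 (z.1 - ζ1 a')) •
        pbM (fun y => K2 (y - ζ2 b')) (fun y => G (z.1, y)) z.2)

/-- Integrand of the scalar integral `𝓘_ℓ^{(ss')}`. -/
def intI {N : ℕ} (w : Fin N → ℝ) (K : ℝ × ℝ → ℝ) (ζ : Fin N → ℝ × ℝ)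
    (s s' : Fin N) (hl : ℝ × ℝ → ℝ) (z : ℝ × ℝ) : ℝ :=
  K (z - ζ s) * pbR (fun y => K (y - ζ s')) hl z / den w K ζ z

/-- Integrand of the matrix-valued integral `Î_ℓ^{(ss')}`. -/
def intIhat {N : ℕ} (w : Fin N → ℝ) (K : ℝ × ℝ → ℝ) (ζ : Fin N → ℝ × ℝ)
    (s s' : Fin N) (Hl : ℝ × ℝ → Matrix (Fin 2) (Fin 2) ℂ)
    (z : ℝ × ℝ) : Matrix (Fin 2) (Fin 2) ℂ :=
  (den w K ζ z)⁻¹ • (K (z - ζ s) • pbM (fun y => K (y - ζ s')) Hl z)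

/-- Integrand of the scalar integral `𝒥_ℓ^{(ss')}`. -/
def intJ {N : ℕ} (w : Fin N → ℝ) (K : ℝ × ℝ → ℝ) (ζ : Fin N → ℝ × ℝ)
    (s s' : Fin N) (hl : ℝ × ℝ → ℝ) (z : ℝ × ℝ) : ℝ :=
  K (z - ζ s) * K (z - ζ s') * hl z / den w K ζ z

/-- Integrand of the matrix-valued integral `𝒥̂_ℓ^{(ss')}`. -/
def intJhat {N : ℕ} (w : Fin N → ℝ) (K : ℝ × ℝ → ℝ) (ζ : Fin N → ℝ × ℝ)
    (s s' : Fin N) (Hl : ℝ × ℝ → Matrix (Fin 2) (Fin 2) ℂ)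
    (z : ℝ × ℝ) : Matrix (Fin 2) (Fin 2) ℂ :=
  ((K (z - ζ s) * K (z - ζ s')) / den w K ζ z) • Hl z

/-!
The integrand of `Î_{aba'b'}` is linear in the Hamiltonian, because the Poisson brackets are,
so it splits along the four terms of `Ĥ`. The constant `Ĥ_Q` has vanishing brackets, and
`H_c · 𝟙` gives a real multiple of `𝟙` at every point, hence also after integration. For
`h₁(z₁) · Ĥ₂(z₂)` each bracket differentiates only one factor, so the integrand is a sum of
two products `f(z₁) • g(z₂)`, which Fubini's theorem factors into the two-dimensional
integrals. The integrand is symmetric under exchanging the two degrees of freedom, so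
`h₂(z₂) · Ĥ₁(z₁)` is the same computation after swapping the factors of `ℝ² × ℝ²`.
-/

local notation "M2" => Matrix (Fin 2) (Fin 2) ℂ

-- Instance search does not find `ContinuousENorm` on matrices from the local norm instance;
-- like the statement, this notation supplies it explicitly.
local notation "IntegrableM" => @Integrable _ _ SeminormedAddGroup.toContinuousENorm _ _

section Partial

variable {𝕜 E F G : Type*} [NontriviallyNormedField 𝕜] [NormedAddCommGroup E] [NormedSpace 𝕜 E]
  [NormedAddCommGroup F] [NormedSpace 𝕜 F] [NormedAddCommGroup G] [NormedSpace 𝕜 G]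
  {f : E × F → G}

lemma Differentiable.comp_prodMk_const (hf : Differentiable 𝕜 f) (y : F) :
    Differentiable 𝕜 (fun x => f (x, y)) :=
  hf.comp (differentiable_id.prodMk (differentiable_const y))

lemma Differentiable.comp_const_prodMk (hf : Differentiable 𝕜 f) (x : E) :
    Differentiable 𝕜 (fun y => f (x, y)) :=
  hf.comp ((differentiable_const x).prodMk differentiable_id)

end Partial

section PoissonBracket

variable {f : ℝ × ℝ → ℝ} {z : ℝ × ℝ}

lemma pbM_add {g g' : ℝ × ℝ → M2} (hg : DifferentiableAt ℝ g z)
    (hg' : DifferentiableAt ℝ g' z) :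
    pbM f (fun y => g y + g' y) z = pbM f g z + pbM f g' z := by
  have hfd : fderiv ℝ (fun y => g y + g' y) z = fderiv ℝ g z + fderiv ℝ g' z :=
    fderiv_fun_add hg hg'
  simp only [pbM, hfd, _root_.add_apply, smul_add]
  abel

lemma pbM_const (M : M2) : pbM f (fun _ => M) z = 0 := by
  simp [pbM]

lemma pbM_smul_const {h : ℝ × ℝ → ℝ} (hh : DifferentiableAt ℝ h z) (M : M2) :
    pbM f (fun y => h y • M) z = pbR f h z • M := by
  have hfd : fderiv ℝ (fun y => h y • M) z = (fderiv ℝ h z).smulRight M :=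
    fderiv_smul_const hh M
  simp only [pbM, pbR, hfd, ContinuousLinearMap.smulRight_apply, smul_smul, sub_smul]

lemma pbM_const_smul {g : ℝ × ℝ → M2} (c : ℝ) (hg : DifferentiableAt ℝ g z) :
    pbM f (fun y => c • g y) z = c • pbM f g z := by
  have hfd : fderiv ℝ (fun y => c • g y) z = c • fderiv ℝ g z := fderiv_fun_const_smul hg c
  simp only [pbM, hfd, _root_.smul_apply, smul_sub, smul_comm c]

end PoissonBracket

section Backreaction

variable {N : ℕ} {w : Fin N → ℝ} {K1 K2 : ℝ × ℝ → ℝ} {ζ1 ζ2 : Fin N → ℝ × ℝ}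
  {a b a' b' : Fin N}

lemma integrand4_add {G G' : (ℝ × ℝ) × (ℝ × ℝ) → M2} (hG : Differentiable ℝ G)
    (hG' : Differentiable ℝ G') :
    integrand4 w K1 K2 ζ1 ζ2 a b a' b' (G + G')
      = integrand4 w K1 K2 ζ1 ζ2 a b a' b' G + integrand4 w K1 K2 ζ1 ζ2 a b a' b' G' := by
  ext1 z
  simp only [integrand4, Pi.add_apply]
  rw [pbM_add (hG.comp_prodMk_const z.2 _) (hG'.comp_prodMk_const z.2 _),
    pbM_add (hG.comp_const_prodMk z.1 _) (hG'.comp_const_prodMk z.1 _)]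
  simp only [smul_add]
  abel

lemma integrand4_const (M : M2) : integrand4 w K1 K2 ζ1 ζ2 a b a' b' (fun _ => M) = 0 := by
  ext1 z
  simp [integrand4, pbM_const]

lemma integrand4_hybrid {Hc : (ℝ × ℝ) × (ℝ × ℝ) → ℝ} {h1 h2 : ℝ × ℝ → ℝ}
    {H1 H2 : ℝ × ℝ → M2} (hHc : Differentiable ℝ Hc) (hh1 : Differentiable ℝ h1)
    (hh2 : Differentiable ℝ h2) (hH1 : Differentiable ℝ H1) (hH2 : Differentiable ℝ H2)
    (HQ : M2) :
    integrand4 w K1 K2 ζ1 ζ2 a b a' b'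
        (fun z => Hc z • (1 : M2) + HQ + h1 z.1 • H2 z.2 + h2 z.2 • H1 z.1)
      = integrand4 w K1 K2 ζ1 ζ2 a b a' b' (fun z => Hc z • (1 : M2))
        + integrand4 w K1 K2 ζ1 ζ2 a b a' b' (fun z => h1 z.1 • H2 z.2)
        + integrand4 w K1 K2 ζ1 ζ2 a b a' b' (fun z => h2 z.2 • H1 z.1) := by
  have dC : Differentiable ℝ (fun z => Hc z • (1 : M2)) := hHc.smul_const _
  have dQ : Differentiable ℝ (fun _ : (ℝ × ℝ) × (ℝ × ℝ) => HQ) := differentiable_const HQ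
  have d12 : Differentiable ℝ (fun z : (ℝ × ℝ) × (ℝ × ℝ) => h1 z.1 • H2 z.2) :=
    (hh1.comp differentiable_fst).smul (hH2.comp differentiable_snd)
  have d21 : Differentiable ℝ (fun z : (ℝ × ℝ) × (ℝ × ℝ) => h2 z.2 • H1 z.1) :=
    (hh2.comp differentiable_snd).smul (hH1.comp differentiable_fst)
  rw [show (fun z => Hc z • (1 : M2) + HQ + h1 z.1 • H2 z.2 + h2 z.2 • H1 z.1)
      = (fun z => Hc z • (1 : M2)) + (fun _ => HQ) + (fun z => h1 z.1 • H2 z.2)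
        + (fun z => h2 z.2 • H1 z.1) from rfl,
    integrand4_add ((dC.add dQ).add d12) d21, integrand4_add (dC.add dQ) d12,
    integrand4_add dC dQ, integrand4_const, add_zero]

lemma integrand4_smul_const {F : (ℝ × ℝ) × (ℝ × ℝ) → ℝ} (hF : Differentiable ℝ F) (M : M2) :
    ∃ r : (ℝ × ℝ) × (ℝ × ℝ) → ℝ,
      integrand4 w K1 K2 ζ1 ζ2 a b a' b' (fun z => F z • M) = fun z => r z • M := by
  refine ⟨fun z => (den w K1 ζ1 z.1 * den w K2 ζ2 z.2)⁻¹
    * (K1 (z.1 - ζ1 a) * K2 (z.2 - ζ2 b) * K2 (z.2 - ζ2 b')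
        * pbR (fun y => K1 (y - ζ1 a')) (fun y => F (y, z.2)) z.1
      + K1 (z.1 - ζ1 a) * K2 (z.2 - ζ2 b) * K1 (z.1 - ζ1 a')
        * pbR (fun y => K2 (y - ζ2 b')) (fun y => F (z.1, y)) z.2), ?_⟩
  ext1 z
  simp only [integrand4]
  rw [pbM_smul_const (hF.comp_prodMk_const z.2 _), pbM_smul_const (hF.comp_const_prodMk z.1 _),
    smul_smul, smul_smul, ← add_smul, smul_smul]

lemma integrand4_smul_prod {h : ℝ × ℝ → ℝ} {H : ℝ × ℝ → M2} (hh : Differentiable ℝ h)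
    (hH : Differentiable ℝ H) :
    integrand4 w K1 K2 ζ1 ζ2 a b a' b' (fun z => h z.1 • H z.2)
      = fun z => intI w K1 ζ1 a a' h z.1 • intJhat w K2 ζ2 b b' H z.2
          + intJ w K1 ζ1 a a' h z.1 • intIhat w K2 ζ2 b b' H z.2 := by
  ext1 z
  simp only [integrand4, intI, intJ, intIhat, intJhat]
  rw [pbM_smul_const (hh z.1), pbM_const_smul _ (hH z.2)]
  simp only [smul_add, smul_smul, div_eq_mul_inv, mul_inv]
  congr 1 <;> congr 1 <;> ring

lemma integrand4_comp_swap (G : (ℝ × ℝ) × (ℝ × ℝ) → M2) (z : (ℝ × ℝ) × (ℝ × ℝ)) :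
    integrand4 w K1 K2 ζ1 ζ2 a b a' b' (fun z => G z.swap) z
      = integrand4 w K2 K1 ζ2 ζ1 b a b' a' G z.swap := by
  simp only [integrand4, Prod.fst_swap, Prod.snd_swap, Prod.swap_prod_mk]
  rw [mul_comm (den w K2 ζ2 z.2), add_comm]
  congr 3 <;> ring

lemma integral_integrand4_smul_const {F : (ℝ × ℝ) × (ℝ × ℝ) → ℝ} (hF : Differentiable ℝ F)
    (M : M2) : ∃ c : ℝ, ∫ z, integrand4 w K1 K2 ζ1 ζ2 a b a' b' (fun z => F z • M) z = c • M := by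
  obtain ⟨r, hr⟩ : ∃ r : (ℝ × ℝ) × (ℝ × ℝ) → ℝ,
      integrand4 w K1 K2 ζ1 ζ2 a b a' b' (fun z => F z • M) = fun z => r z • M :=
    integrand4_smul_const hF M
  exact ⟨∫ z, r z, by rw [hr, integral_smul_const]⟩

section SmulProd

variable {h : ℝ × ℝ → ℝ} {H : ℝ × ℝ → M2} (hh : Differentiable ℝ h) (hH : Differentiable ℝ H)
  (hI : Integrable (intI w K1 ζ1 a a' h)) (hJhat : IntegrableM (intJhat w K2 ζ2 b b' H) volume)
  (hJ : Integrable (intJ w K1 ζ1 a a' h)) (hIhat : IntegrableM (intIhat w K2 ζ2 b b' H) volume)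
include hh hH hI hJhat hJ hIhat

lemma integrable_integrand4_smul_prod :
    IntegrableM (integrand4 w K1 K2 ζ1 ζ2 a b a' b' (fun z => h z.1 • H z.2)) volume := by
  rw [integrand4_smul_prod hh hH, Measure.volume_eq_prod]
  exact (hI.smul_prod hJhat).add (hJ.smul_prod hIhat)

lemma integral_integrand4_smul_prod :
    ∫ z, integrand4 w K1 K2 ζ1 ζ2 a b a' b' (fun z => h z.1 • H z.2) z
      = (∫ z, intI w K1 ζ1 a a' h z) • (∫ z, intJhat w K2 ζ2 b b' H z)
        + (∫ z, intJ w K1 ζ1 a a' h z) • ∫ z, intIhat w K2 ζ2 b b' H z := by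
  rw [integrand4_smul_prod hh hH, Measure.volume_eq_prod,
    integral_add (hI.smul_prod hJhat) (hJ.smul_prod hIhat), integral_prod_smul, integral_prod_smul]

end SmulProd

section SmulProdSwap

variable {h : ℝ × ℝ → ℝ} {H : ℝ × ℝ → M2} (hh : Differentiable ℝ h) (hH : Differentiable ℝ H)
  (hI : Integrable (intI w K2 ζ2 b b' h)) (hJhat : IntegrableM (intJhat w K1 ζ1 a a' H) volume)
  (hJ : Integrable (intJ w K2 ζ2 b b' h)) (hIhat : IntegrableM (intIhat w K1 ζ1 a a' H) volume)
include hh hH hI hJhat hJ hIhat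

lemma integrable_integrand4_smul_prod_swap :
    IntegrableM (integrand4 w K1 K2 ζ1 ζ2 a b a' b' (fun z => h z.2 • H z.1)) volume := by
  have hswap := integrable_integrand4_smul_prod hh hH hI hJhat hJ hIhat
  rw [Measure.volume_eq_prod] at hswap ⊢
  refine hswap.swap.congr (.of_forall fun z => ?_)
  exact (integrand4_comp_swap (fun z => h z.1 • H z.2) z).symm

lemma integral_integrand4_smul_prod_swap :
    ∫ z, integrand4 w K1 K2 ζ1 ζ2 a b a' b' (fun z => h z.2 • H z.1) z
      = (∫ z, intI w K2 ζ2 b b' h z) • (∫ z, intJhat w K1 ζ1 a a' H z)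
        + (∫ z, intJ w K2 ζ2 b b' h z) • ∫ z, intIhat w K1 ζ1 a a' H z := by
  calc ∫ z, integrand4 w K1 K2 ζ1 ζ2 a b a' b' (fun z => h z.2 • H z.1) z
      = ∫ z, integrand4 w K2 K1 ζ2 ζ1 b a b' a' (fun z => h z.1 • H z.2) z.swap :=
        integral_congr_ae (.of_forall (integrand4_comp_swap (fun z => h z.1 • H z.2)))
    _ = ∫ z, integrand4 w K2 K1 ζ2 ζ1 b a b' a' (fun z => h z.1 • H z.2) z := by
        rw [Measure.volume_eq_prod]
        exact integral_prod_swap _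
    _ = _ := integral_integrand4_smul_prod hh hH hI hJhat hJ hIhat

end SmulProdSwap

end Backreaction

theorem backreaction_integral_factorization_general
    (N : ℕ)
    (K1 K2 : ℝ × ℝ → ℝ)
    (ζ1 ζ2 : Fin N → ℝ × ℝ)
    (w : Fin N → ℝ)
    (Hh : (ℝ × ℝ) × (ℝ × ℝ) → Matrix (Fin 2) (Fin 2) ℂ)
    (Hc : (ℝ × ℝ) × (ℝ × ℝ) → ℝ) (hHc : ContDiff ℝ 1 Hc)
    (HQ : Matrix (Fin 2) (Fin 2) ℂ)
    (h1 h2 : ℝ × ℝ → ℝ) (hh1 : ContDiff ℝ 1 h1) (hh2 : ContDiff ℝ 1 h2)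
    (H1 H2 : ℝ × ℝ → Matrix (Fin 2) (Fin 2) ℂ)
    (hH1 : ContDiff ℝ 1 H1) (hH2 : ContDiff ℝ 1 H2)
    (hform : ∀ z : (ℝ × ℝ) × (ℝ × ℝ),
      Hh z = Hc z • (1 : Matrix (Fin 2) (Fin 2) ℂ) + HQ
        + h1 z.1 • H2 z.2 + h2 z.2 • H1 z.1)
    (a b a' b' : Fin N)
    (hintHc : @Integrable _ _ SeminormedAddGroup.toContinuousENorm _ _ (integrand4 w K1 K2 ζ1 ζ2 a b a' b'
      (fun z => Hc z • (1 : Matrix (Fin 2) (Fin 2) ℂ))) volume)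
    (hintI1 : Integrable (intI w K1 ζ1 a a' h1))
    (hintI2 : Integrable (intI w K2 ζ2 b b' h2))
    (hintIhat1 : @Integrable _ _ SeminormedAddGroup.toContinuousENorm _ _ (intIhat w K1 ζ1 a a' H1) volume)
    (hintIhat2 : @Integrable _ _ SeminormedAddGroup.toContinuousENorm _ _ (intIhat w K2 ζ2 b b' H2) volume)
    (hintJ1 : Integrable (intJ w K1 ζ1 a a' h1))
    (hintJ2 : Integrable (intJ w K2 ζ2 b b' h2))
    (hintJhat1 : @Integrable _ _ SeminormedAddGroup.toContinuousENorm _ _ (intJhat w K1 ζ1 a a' H1) volume)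
    (hintJhat2 : @Integrable _ _ SeminormedAddGroup.toContinuousENorm _ _ (intJhat w K2 ζ2 b b' H2) volume) :
    ∃ c : ℝ,
      (∫ z : (ℝ × ℝ) × (ℝ × ℝ), integrand4 w K1 K2 ζ1 ζ2 a b a' b' Hh z)
        = (∫ z : ℝ × ℝ, intJ w K2 ζ2 b b' h2 z) •
            (∫ z : ℝ × ℝ, intIhat w K1 ζ1 a a' H1 z)
          + (∫ z : ℝ × ℝ, intI w K1 ζ1 a a' h1 z) •
            (∫ z : ℝ × ℝ, intJhat w K2 ζ2 b b' H2 z)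
          + (∫ z : ℝ × ℝ, intI w K2 ζ2 b b' h2 z) •
            (∫ z : ℝ × ℝ, intJhat w K1 ζ1 a a' H1 z)
          + (∫ z : ℝ × ℝ, intJ w K1 ζ1 a a' h1 z) •
            (∫ z : ℝ × ℝ, intIhat w K2 ζ2 b b' H2 z)
          + c • (1 : Matrix (Fin 2) (Fin 2) ℂ) := by
  have dHc := hHc.differentiable one_ne_zero
  have dh1 := hh1.differentiable one_ne_zero
  have dh2 := hh2.differentiable one_ne_zero
  have dH1 := hH1.differentiable one_ne_zero
  have dH2 := hH2.differentiable one_ne_zero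
  have int12 := integrable_integrand4_smul_prod dh1 dH2 hintI1 hintJhat2 hintJ1 hintIhat2
  have int21 := integrable_integrand4_smul_prod_swap dh2 dH1 hintI2 hintJhat1 hintJ2 hintIhat1
  obtain ⟨c, hc⟩ : ∃ c : ℝ, ∫ z, integrand4 w K1 K2 ζ1 ζ2 a b a' b' (fun z => Hc z • (1 : M2)) z
      = c • (1 : M2) := integral_integrand4_smul_const dHc 1
  refine ⟨c, ?_⟩
  rw [funext hform, integrand4_hybrid dHc dh1 dh2 dH1 dH2, integral_add' (hintHc.add int12) int21,
    integral_add' hintHc int12, hc,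
    integral_integrand4_smul_prod dh1 dH2 hintI1 hintJhat2 hintJ1 hintIhat2,
    integral_integrand4_smul_prod_swap dh2 dH1 hintI2 hintJhat1 hintJ2 hintIhat1]
  abel

/-- Factorization of the four-dimensional backreaction integral of the
two-dimensional koopmon scheme: for product regularization kernels and hybrid
Hamiltonians of the form
`Ĥ(z₁,z₂) = H_c(z₁,z₂)·𝟙 + Ĥ_Q + h₁(z₁)·Ĥ₂(z₂) + h₂(z₂)·Ĥ₁(z₁)`,
one has `Î_{aba'b'} = Î₁^{(aa')}𝒥₂^{(bb')} + 𝓘₁^{(aa')}𝒥̂₂^{(bb')}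
+ 𝓘₂^{(bb')}𝒥̂₁^{(aa')} + Î₂^{(bb')}𝒥₁^{(aa')} + c·𝟙` for some real `c`. -/
theorem backreaction_integral_factorization
    (N : ℕ) (hN : 1 ≤ N)
    (K1 K2 : ℝ × ℝ → ℝ)
    (hK1smooth : ContDiff ℝ 1 K1) (hK2smooth : ContDiff ℝ 1 K2)
    (hK1pos : ∀ z, 0 < K1 z) (hK2pos : ∀ z, 0 < K2 z)
    (ζ1 ζ2 : Fin N → ℝ × ℝ)
    (w : Fin N → ℝ) (hw : ∀ c, 0 < w c)
    (Hh : (ℝ × ℝ) × (ℝ × ℝ) → Matrix (Fin 2) (Fin 2) ℂ)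
    (Hc : (ℝ × ℝ) × (ℝ × ℝ) → ℝ) (hHc : ContDiff ℝ 1 Hc)
    (HQ : Matrix (Fin 2) (Fin 2) ℂ) (hHQ : HQ.IsHermitian)
    (h1 h2 : ℝ × ℝ → ℝ) (hh1 : ContDiff ℝ 1 h1) (hh2 : ContDiff ℝ 1 h2)
    (H1 H2 : ℝ × ℝ → Matrix (Fin 2) (Fin 2) ℂ)
    (hH1 : ContDiff ℝ 1 H1) (hH2 : ContDiff ℝ 1 H2)
    (hH1herm : ∀ z, (H1 z).IsHermitian) (hH2herm : ∀ z, (H2 z).IsHermitian)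
    (hform : ∀ z : (ℝ × ℝ) × (ℝ × ℝ),
      Hh z = Hc z • (1 : Matrix (Fin 2) (Fin 2) ℂ) + HQ
        + h1 z.1 • H2 z.2 + h2 z.2 • H1 z.1)
    (a b a' b' : Fin N)
    (hint : @Integrable _ _ SeminormedAddGroup.toContinuousENorm _ _ (integrand4 w K1 K2 ζ1 ζ2 a b a' b' Hh) volume)
    (hintHc : @Integrable _ _ SeminormedAddGroup.toContinuousENorm _ _ (integrand4 w K1 K2 ζ1 ζ2 a b a' b'
      (fun z => Hc z • (1 : Matrix (Fin 2) (Fin 2) ℂ))) volume)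
    (hintHQ : @Integrable _ _ SeminormedAddGroup.toContinuousENorm _ _ (integrand4 w K1 K2 ζ1 ζ2 a b a' b' (fun _ => HQ)) volume)
    (hint12 : @Integrable _ _ SeminormedAddGroup.toContinuousENorm _ _ (integrand4 w K1 K2 ζ1 ζ2 a b a' b'
      (fun z => h1 z.1 • H2 z.2)) volume)
    (hint21 : @Integrable _ _ SeminormedAddGroup.toContinuousENorm _ _ (integrand4 w K1 K2 ζ1 ζ2 a b a' b'
      (fun z => h2 z.2 • H1 z.1)) volume)
    (hintI1 : Integrable (intI w K1 ζ1 a a' h1))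
    (hintI2 : Integrable (intI w K2 ζ2 b b' h2))
    (hintIhat1 : @Integrable _ _ SeminormedAddGroup.toContinuousENorm _ _ (intIhat w K1 ζ1 a a' H1) volume)
    (hintIhat2 : @Integrable _ _ SeminormedAddGroup.toContinuousENorm _ _ (intIhat w K2 ζ2 b b' H2) volume)
    (hintJ1 : Integrable (intJ w K1 ζ1 a a' h1))
    (hintJ2 : Integrable (intJ w K2 ζ2 b b' h2))
    (hintJhat1 : @Integrable _ _ SeminormedAddGroup.toContinuousENorm _ _ (intJhat w K1 ζ1 a a' H1) volume)
    (hintJhat2 : @Integrable _ _ SeminormedAddGroup.toContinuousENorm _ _ (intJhat w K2 ζ2 b b' H2) volume) :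
    ∃ c : ℝ,
      (∫ z : (ℝ × ℝ) × (ℝ × ℝ), integrand4 w K1 K2 ζ1 ζ2 a b a' b' Hh z)
        = (∫ z : ℝ × ℝ, intJ w K2 ζ2 b b' h2 z) •
            (∫ z : ℝ × ℝ, intIhat w K1 ζ1 a a' H1 z)
          + (∫ z : ℝ × ℝ, intI w K1 ζ1 a a' h1 z) •
            (∫ z : ℝ × ℝ, intJhat w K2 ζ2 b b' H2 z)
          + (∫ z : ℝ × ℝ, intI w K2 ζ2 b b' h2 z) •
            (∫ z : ℝ × ℝ, intJhat w K1 ζ1 a a' H1 z)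
          + (∫ z : ℝ × ℝ, intJ w K1 ζ1 a a' h1 z) •
            (∫ z : ℝ × ℝ, intIhat w K2 ζ2 b b' H2 z)
          + c • (1 : Matrix (Fin 2) (Fin 2) ℂ) :=
  backreaction_integral_factorization_general N K1 K2 ζ1 ζ2 w Hh Hc hHc HQ h1 h2 hh1 hh2 H1 H2 hH1
    hH2 hform a b a' b' hintHc hintI1 hintI2 hintIhat1 hintIhat2 hintJ1 hintJ2 hintJhat1 hintJhat2

end
end

section
/- Let N ≥ 1, let 𝖪_1, 𝖪_2 : ℝ → ℝ be strictly positive C¹ kernels, let q_1^{(1)}, …, q_1^{(N)} ∈ ℝ and q_2^{(1)}, …, q_2^{(N)} ∈ ℝ be points, and let w_1, …, w_N be positive weights; set 𝖪_ℓ^{(s)}(r) := 𝖪_ℓ(r − q_ℓ^{(s)}) for ℓ ∈ {1,2}. Fix indices a, b, a', b' ∈ {1, …, N} and assume that the two-dimensional integrand below and each of the one-dimensional integrands below are integrable. Then ∫_ℝ ∫_ℝ [ (𝖪_1^{(a)})'(r_1)·(𝖪_1^{(a')})'(r_1)·𝖪_2^{(b)}(r_2)·𝖪_2^{(b')}(r_2)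 + 𝖪_1^{(a)}(r_1)·𝖪_1^{(a')}(r_1)·(𝖪_2^{(b)})'(r_2)·(𝖪_2^{(b')})'(r_2) ] / ( Σ_{c,d=1}^N w_c w_d·𝖪_1^{(c)}(r_1)·𝖪_2^{(d)}(r_2) ) dr_1 dr_2 = 𝓘_1^{(aa')}·𝒥_2^{(bb')} + 𝓘_2^{(bb')}·𝒥_1^{(aa')}, where for ℓ ∈ {1,2} and indices s, s': 𝓘_ℓ^{(ss')} := ∫_ℝ (𝖪_ℓ^{(s)})'(r)·(𝖪_ℓ^{(s')})'(r) / (Σ_c w_c 𝖪_ℓ^{(c)}(r)) dr and 𝒥_ℓ^{(ss')} := ∫_ℝ 𝖪_ℓ^{(s)}(r)·𝖪_ℓ^{(s')}(r) / (Σ_d w_d 𝖪_ℓ^{(d)}(r)) dr. -/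
open MeasureTheory

/-- Fubini factorization of the two-dimensional bohmion coupling integral into
products of one-dimensional integrals
`∫∫ (𝖪₁ᵃ' 𝖪₁ᵃ'' 𝖪₂ᵇ 𝖪₂ᵇ' + 𝖪₁ᵃ 𝖪₁ᵃ' 𝖪₂ᵇ' 𝖪₂ᵇ'')/(Σ w_c w_d 𝖪₁ᶜ 𝖪₂ᵈ)
  = 𝓘₁^{aa'}·𝒥₂^{bb'} + 𝓘₂^{bb'}·𝒥₁^{aa'}`. -/
theorem bohmion_integral_factorization
    (N : ℕ) (hN : 1 ≤ N)
    (K1 K2 : ℝ → ℝ)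
    (hK1smooth : ContDiff ℝ 1 K1) (hK2smooth : ContDiff ℝ 1 K2)
    (hK1pos : ∀ r, 0 < K1 r) (hK2pos : ∀ r, 0 < K2 r)
    (q1 q2 : Fin N → ℝ)
    (w : Fin N → ℝ) (hw : ∀ c, 0 < w c)
    (a b a' b' : Fin N)
    (hint2d : Integrable (fun r : ℝ × ℝ =>
      (deriv (fun x => K1 (x - q1 a)) r.1 * deriv (fun x => K1 (x - q1 a')) r.1
          * K2 (r.2 - q2 b) * K2 (r.2 - q2 b')
        + K1 (r.1 - q1 a) * K1 (r.1 - q1 a')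
          * deriv (fun x => K2 (x - q2 b)) r.2 * deriv (fun x => K2 (x - q2 b')) r.2)
        / (∑ c, ∑ d, w c * w d * K1 (r.1 - q1 c) * K2 (r.2 - q2 d))))
    (hintI1 : Integrable (fun r : ℝ =>
      deriv (fun x => K1 (x - q1 a)) r * deriv (fun x => K1 (x - q1 a')) r
        / (∑ c, w c * K1 (r - q1 c))))
    (hintI2 : Integrable (fun r : ℝ =>
      deriv (fun x => K2 (x - q2 b)) r * deriv (fun x => K2 (x - q2 b')) r
        / (∑ c, w c * K2 (r - q2 c))))
    (hintJ1 : Integrable (fun r : ℝ =>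
      K1 (r - q1 a) * K1 (r - q1 a') / (∑ d, w d * K1 (r - q1 d))))
    (hintJ2 : Integrable (fun r : ℝ =>
      K2 (r - q2 b) * K2 (r - q2 b') / (∑ d, w d * K2 (r - q2 d)))) :
    (∫ r : ℝ × ℝ,
      (deriv (fun x => K1 (x - q1 a)) r.1 * deriv (fun x => K1 (x - q1 a')) r.1
          * K2 (r.2 - q2 b) * K2 (r.2 - q2 b')
        + K1 (r.1 - q1 a) * K1 (r.1 - q1 a')
          * deriv (fun x => K2 (x - q2 b)) r.2 * deriv (fun x => K2 (x - q2 b')) r.2)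
        / (∑ c, ∑ d, w c * w d * K1 (r.1 - q1 c) * K2 (r.2 - q2 d)))
    = (∫ r : ℝ,
        deriv (fun x => K1 (x - q1 a)) r * deriv (fun x => K1 (x - q1 a')) r
          / (∑ c, w c * K1 (r - q1 c)))
      * (∫ r : ℝ,
        K2 (r - q2 b) * K2 (r - q2 b') / (∑ d, w d * K2 (r - q2 d)))
    + (∫ r : ℝ,
        deriv (fun x => K2 (x - q2 b)) r * deriv (fun x => K2 (x - q2 b')) r
          / (∑ c, w c * K2 (r - q2 c)))
      * (∫ r : ℝ,
        K1 (r - q1 a) * K1 (r - q1 a') / (∑ d, w d * K1 (r - q1 d))) := by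
  haveI : Nonempty (Fin N) := ⟨⟨0, hN⟩⟩
  have hS1 : ∀ x : ℝ, (0:ℝ) < ∑ c, w c * K1 (x - q1 c) := fun x =>
    Finset.sum_pos (fun c _ => mul_pos (hw c) (hK1pos _)) Finset.univ_nonempty
  have hS2 : ∀ x : ℝ, (0:ℝ) < ∑ c, w c * K2 (x - q2 c) := fun x =>
    Finset.sum_pos (fun c _ => mul_pos (hw c) (hK2pos _)) Finset.univ_nonempty
  have key : ∀ r : ℝ × ℝ,
      (deriv (fun x => K1 (x - q1 a)) r.1 * deriv (fun x => K1 (x - q1 a')) r.1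
          * K2 (r.2 - q2 b) * K2 (r.2 - q2 b')
        + K1 (r.1 - q1 a) * K1 (r.1 - q1 a')
          * deriv (fun x => K2 (x - q2 b)) r.2 * deriv (fun x => K2 (x - q2 b')) r.2)
        / (∑ c, ∑ d, w c * w d * K1 (r.1 - q1 c) * K2 (r.2 - q2 d))
      = (deriv (fun x => K1 (x - q1 a)) r.1 * deriv (fun x => K1 (x - q1 a')) r.1
            / (∑ c, w c * K1 (r.1 - q1 c)))
          * (K2 (r.2 - q2 b) * K2 (r.2 - q2 b') / (∑ d, w d * K2 (r.2 - q2 d)))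
        + (K1 (r.1 - q1 a) * K1 (r.1 - q1 a') / (∑ d, w d * K1 (r.1 - q1 d)))
          * (deriv (fun x => K2 (x - q2 b)) r.2 * deriv (fun x => K2 (x - q2 b')) r.2
            / (∑ c, w c * K2 (r.2 - q2 c))) := by
    intro r
    have hd : (∑ c, ∑ d, w c * w d * K1 (r.1 - q1 c) * K2 (r.2 - q2 d))
        = (∑ c, w c * K1 (r.1 - q1 c)) * (∑ d, w d * K2 (r.2 - q2 d)) := by
      rw [Finset.sum_mul_sum]
      exact Finset.sum_congr rfl fun c _ => Finset.sum_congr rfl fun d _ => by ring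
    rw [hd]
    have h1 := (hS1 r.1).ne'
    have h2 := (hS2 r.2).ne'
    field_simp
  calc (∫ r : ℝ × ℝ,
      (deriv (fun x => K1 (x - q1 a)) r.1 * deriv (fun x => K1 (x - q1 a')) r.1
          * K2 (r.2 - q2 b) * K2 (r.2 - q2 b')
        + K1 (r.1 - q1 a) * K1 (r.1 - q1 a')
          * deriv (fun x => K2 (x - q2 b)) r.2 * deriv (fun x => K2 (x - q2 b')) r.2)
        / (∑ c, ∑ d, w c * w d * K1 (r.1 - q1 c) * K2 (r.2 - q2 d)))
      = ∫ r : ℝ × ℝ,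
        ((deriv (fun x => K1 (x - q1 a)) r.1 * deriv (fun x => K1 (x - q1 a')) r.1
            / (∑ c, w c * K1 (r.1 - q1 c)))
          * (K2 (r.2 - q2 b) * K2 (r.2 - q2 b') / (∑ d, w d * K2 (r.2 - q2 d)))
        + (K1 (r.1 - q1 a) * K1 (r.1 - q1 a') / (∑ d, w d * K1 (r.1 - q1 d)))
          * (deriv (fun x => K2 (x - q2 b)) r.2 * deriv (fun x => K2 (x - q2 b')) r.2
            / (∑ c, w c * K2 (r.2 - q2 c)))) := by
        exact integral_congr_ae (Filter.Eventually.of_forall key)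
    _ = (∫ r : ℝ × ℝ,
          (deriv (fun x => K1 (x - q1 a)) r.1 * deriv (fun x => K1 (x - q1 a')) r.1
            / (∑ c, w c * K1 (r.1 - q1 c)))
          * (K2 (r.2 - q2 b) * K2 (r.2 - q2 b') / (∑ d, w d * K2 (r.2 - q2 d))))
        + ∫ r : ℝ × ℝ,
          (K1 (r.1 - q1 a) * K1 (r.1 - q1 a') / (∑ d, w d * K1 (r.1 - q1 d)))
          * (deriv (fun x => K2 (x - q2 b)) r.2 * deriv (fun x => K2 (x - q2 b')) r.2
            / (∑ c, w c * K2 (r.2 - q2 c))) := by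
        exact integral_add (hintI1.mul_prod hintJ2) (hintJ1.mul_prod hintI2)
    _ = _ := by
        rw [Measure.volume_eq_prod,
          integral_prod_mul (μ := (volume : Measure ℝ)) (ν := (volume : Measure ℝ))
            (f := fun x : ℝ => deriv (fun t => K1 (t - q1 a)) x
              * deriv (fun t => K1 (t - q1 a')) x / (∑ c, w c * K1 (x - q1 c)))
            (g := fun y : ℝ => K2 (y - q2 b) * K2 (y - q2 b')
              / (∑ d, w d * K2 (y - q2 d))),
          integral_prod_mul (μ := (volume : Measure ℝ)) (ν := (volume : Measure ℝ))
            (f := fun x : ℝ => K1 (x - q1 a) * K1 (x - q1 a')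
              / (∑ d, w d * K1 (x - q1 d)))
            (g := fun y : ℝ => deriv (fun t => K2 (t - q2 b)) y
              * deriv (fun t => K2 (t - q2 b')) y / (∑ c, w c * K2 (y - q2 c)))]
        ring
end
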